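/- arXiv:1702.03951 — 7 statements merged into one kernel-verified Lean document; each statement's English description precedes it below -/
import Mathlib

section
/- If two bounded measurable functions ξ¹ and ξ² both solve the integral equation ∫ ξ(x) f(x,y) dν(x_mis) = g(x_obs, y) for all (x_obs, y), where f is a nonnegative kernel that is bounded complete in y (i.e., for any bounded measurable h, ∫ h(x) f(x,y) dν(x) = 0 for a.e. y implies h = 0 a.e.), then ξ¹ = ξ² almost everywhere. -/
/-!
Subtracting the two equations shows that `ξ₁ - ξ₂` integrates to zero against `f (o, ·) y` on
every fibre over `o`; by Fubini it therefore integrates to zero against `f · y` on the product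
for every `y`. Since `ξ₁ - ξ₂` is bounded and measurable, bounded completeness forces it to
vanish almost everywhere.
-/

open MeasureTheory

namespace MeasureTheory

variable {X Y : Type*} [MeasurableSpace X] [MeasurableSpace Y]

def IsBoundedComplete (ν : Measure X) (μY : Measure Y) (f : X → Y → ℝ) : Prop :=
  ∀ h : X → ℝ, Measurable h → (∃ C, ∀ x, |h x| ≤ C) →
    (∀ᵐ y ∂μY, ∫ x, h x * f x y ∂ν = 0) → h =ᵐ[ν] 0

theorem Integrable.mul_of_abs_le {ν : Measure X} {φ ξ : X → ℝ} (hφ : Integrable φ ν)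
    (hξ : Measurable ξ) {C : ℝ} (hC : ∀ x, |ξ x| ≤ C) :
    Integrable (fun x => ξ x * φ x) ν :=
  hφ.bdd_mul hξ.aestronglyMeasurable (.of_forall hC)

theorem IsBoundedComplete.ae_eq {ν : Measure X} {μY : Measure Y} {f : X → Y → ℝ}
    (hcomplete : IsBoundedComplete ν μY f) (hf_int : ∀ y, Integrable (f · y) ν)
    {ξ₁ ξ₂ : X → ℝ} (hξ₁m : Measurable ξ₁) (hξ₂m : Measurable ξ₂)
    (hξ₁b : ∃ C, ∀ x, |ξ₁ x| ≤ C) (hξ₂b : ∃ C, ∀ x, |ξ₂ x| ≤ C)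
    (heq : ∀ᵐ y ∂μY, ∫ x, ξ₁ x * f x y ∂ν = ∫ x, ξ₂ x * f x y ∂ν) :
    ξ₁ =ᵐ[ν] ξ₂ := by
  obtain ⟨C₁, hC₁⟩ := hξ₁b
  obtain ⟨C₂, hC₂⟩ := hξ₂b
  have hbdd : ∀ x, |(ξ₁ - ξ₂) x| ≤ C₁ + C₂ := fun x =>
    (abs_sub _ _).trans (add_le_add (hC₁ x) (hC₂ x))
  rw [← sub_ae_eq_zero]
  refine hcomplete _ (hξ₁m.sub hξ₂m) ⟨_, hbdd⟩ ?_
  filter_upwards [heq] with y hy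
  simp only [Pi.sub_apply, sub_mul]
  rw [integral_sub ((hf_int y).mul_of_abs_le hξ₁m hC₁) ((hf_int y).mul_of_abs_le hξ₂m hC₂), hy,
    sub_self]

theorem integral_prod_eq_of_integral_fiber_eq {O M : Type*} [MeasurableSpace O]
    [MeasurableSpace M] {νO : Measure O} {νM : Measure M} [SFinite νO] [SFinite νM]
    {φ₁ φ₂ : O × M → ℝ} (hφ₁ : Integrable φ₁ (νO.prod νM)) (hφ₂ : Integrable φ₂ (νO.prod νM))
    (heq : ∀ o, ∫ m, φ₁ (o, m) ∂νM = ∫ m, φ₂ (o, m) ∂νM) :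
    ∫ x, φ₁ x ∂(νO.prod νM) = ∫ x, φ₂ x ∂(νO.prod νM) := by
  simp only [integral_prod _ hφ₁, integral_prod _ hφ₂, heq]

end MeasureTheory

theorem unique_solution_of_boundedComplete_general
    {O M Y : Type*} [MeasurableSpace O] [MeasurableSpace M] [MeasurableSpace Y]
    (νO : Measure O) (νM : Measure M) (μY : Measure Y)
    [SigmaFinite νO] [SigmaFinite νM]
    (f : O × M → Y → ℝ) (g : O → Y → ℝ)
    (hf_int : ∀ y, Integrable (fun x => f x y) (νO.prod νM))
    (hcomplete : ∀ h : O × M → ℝ, Measurable h → (∃ C, ∀ x, |h x| ≤ C) →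
      (∀ᵐ y ∂μY, ∫ x, h x * f x y ∂(νO.prod νM) = 0) →
      h =ᵐ[νO.prod νM] 0)
    (ξ₁ ξ₂ : O × M → ℝ)
    (hξ₁m : Measurable ξ₁) (hξ₂m : Measurable ξ₂)
    (hξ₁b : ∃ C, ∀ x, |ξ₁ x| ≤ C) (hξ₂b : ∃ C, ∀ x, |ξ₂ x| ≤ C)
    (heq₁ : ∀ o y, ∫ m, ξ₁ (o, m) * f (o, m) y ∂νM = g o y)
    (heq₂ : ∀ o y, ∫ m, ξ₂ (o, m) * f (o, m) y ∂νM = g o y) :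
    ξ₁ =ᵐ[νO.prod νM] ξ₂ := by
  have hcomplete' : IsBoundedComplete (νO.prod νM) μY f := hcomplete
  obtain ⟨C₁, hC₁⟩ := hξ₁b
  obtain ⟨C₂, hC₂⟩ := hξ₂b
  refine hcomplete'.ae_eq hf_int hξ₁m hξ₂m ⟨C₁, hC₁⟩ ⟨C₂, hC₂⟩ (.of_forall fun y => ?_)
  exact integral_prod_eq_of_integral_fiber_eq ((hf_int y).mul_of_abs_le hξ₁m hC₁)
    ((hf_int y).mul_of_abs_le hξ₂m hC₂) fun o => (heq₁ o y).trans (heq₂ o y).symm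

/-- Uniqueness of bounded solutions to the integral equation
`∫ ξ(x) f(x,y) dν(x_mis) = g(x_obs, y)` when the kernel `f` is bounded complete in `y`. -/
theorem unique_solution_of_boundedComplete
    {O M Y : Type*} [MeasurableSpace O] [MeasurableSpace M] [MeasurableSpace Y]
    (νO : Measure O) (νM : Measure M) (μY : Measure Y)
    [SigmaFinite νO] [SigmaFinite νM]
    (f : O × M → Y → ℝ) (g : O → Y → ℝ)
    (hf_nonneg : ∀ x y, 0 ≤ f x y)
    (hf_meas : Measurable fun p : (O × M) × Y => f p.1 p.2)
    (hf_int : ∀ y, Integrable (fun x => f x y) (νO.prod νM))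
    (hcomplete : ∀ h : O × M → ℝ, Measurable h → (∃ C, ∀ x, |h x| ≤ C) →
      (∀ᵐ y ∂μY, ∫ x, h x * f x y ∂(νO.prod νM) = 0) →
      h =ᵐ[νO.prod νM] 0)
    (ξ₁ ξ₂ : O × M → ℝ)
    (hξ₁m : Measurable ξ₁) (hξ₂m : Measurable ξ₂)
    (hξ₁b : ∃ C, ∀ x, |ξ₁ x| ≤ C) (hξ₂b : ∃ C, ∀ x, |ξ₂ x| ≤ C)
    (heq₁ : ∀ o y, ∫ m, ξ₁ (o, m) * f (o, m) y ∂νM = g o y)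
    (heq₂ : ∀ o y, ∫ m, ξ₂ (o, m) * f (o, m) y ∂νM = g o y) :
    ξ₁ =ᵐ[νO.prod νM] ξ₂ :=
  unique_solution_of_boundedComplete_general νO νM μY f g hf_int hcomplete ξ₁ ξ₂ hξ₁m hξ₂m hξ₁b hξ₂b
    heq₁ heq₂
end

section
/- Suppose R and Y are conditionally independent given (A, X), and P(R = 1_p | A, X, Y) > 0 almost surely. Then for each value a of A and each missing pattern r, the observed-data density satisfies the integral equation f(A=a, X_obs, Y, R=r) = ∫ ξ_{ra}(X) f(A=a, X, Y, R=1_p) dν(X_mis), where ξ_{ra}(X) = P(R=r | A=a, X) / P(R=1_p | A=a, X). -/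
open MeasureTheory

/-- Theorem 1 of the paper: under outcome-independent missingness
`R ⊥ Y | (A, X)` (expressed by the factorization `f(a,x,y,r) = f(a,x,y) · P(R=r|A=a,X=x)`)
and positivity of `P(R = 1_p | A, X, Y)`, the observed-data density satisfies the
integral equation
`f(A=a, X_obs, Y, R=r) = ∫ ξ_{ra}(X) f(A=a, X, Y, R=1_p) dν(X_mis)`,
where `ξ_{ra}(X) = P(R=r | A=a, X) / P(R=1_p | A=a, X)`. -/
theorem observed_density_integral_equation
    {𝒜 O M 𝒴 ℛ : Type*} [MeasurableSpace M]
    (νM : Measure M) [SigmaFinite νM]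
    (full : ℛ)
    -- joint density of (A, X, Y, R), with X = (X_obs, X_mis)
    (fjoint : 𝒜 → O × M → 𝒴 → ℛ → ℝ)
    -- density of (A, X, Y) and conditional law of R given (A, X)
    (fAXY : 𝒜 → O × M → 𝒴 → ℝ) (pR : ℛ → 𝒜 → O × M → ℝ)
    -- outcome-independent missingness: P(R=r | A, X, Y) = P(R=r | A, X)
    (hfact : ∀ a x y r, fjoint a x y r = fAXY a x y * pR r a x)
    -- positivity of P(R = 1_p | A, X, Y)
    (hpos : ∀ a x, 0 < pR full a x)
    -- integrability of the complete-case density in the missing part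
    (hint : ∀ a o y, Integrable (fun m => fjoint a (o, m) y full) νM)
    (hint' : ∀ a o y r, Integrable (fun m => fjoint a (o, m) y r) νM) :
    -- the observed-data density (missing coordinates integrated out) satisfies the
    -- integral equation with kernel the complete-case density
    ∀ a o y r,
      (∫ m, fjoint a (o, m) y r ∂νM) =
        ∫ m, (pR r a (o, m) / pR full a (o, m)) * fjoint a (o, m) y full ∂νM := by
  intro a o y r
  refine integral_congr_ae (Filter.Eventually.of_forall fun m => ?_)
  have h := (hpos a (o, m)).ne'
  simp only
  rw [hfact a (o, m) y r, hfact a (o, m) y full]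
  field_simp
end

section
/- Suppose X and Y are discrete random variables, X taking q possible values and Y taking K possible values, jointly distributed with (A, R) where A ∈ {0,1} and R is a missing indicator. Let Θ_a be the K × q matrix with (k, j) entry f(A=a, X=x_j, Y=y_k, R=1_p). If R ⊥ Y | (A, X), P(R=1_p | A, X, Y) ≥ c > 0, and Θ_a has full column rank q for a = 0 and a = 1, then the joint distribution of (A, X, Y, R) is uniquely determined by the distribution of the observed data (A, X_obs, Y, R). -/
/-!
Under outcome-independent missingness each cell is `f(a,x,y,r) = f(a,x,y,1_p) · ρ(r,a,x)`,
where the odds `ρ(r,a,x) = P(R=r | a,x) / P(R=1_p | a,x)` do not depend on `y`. The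
complete cases (`r = 1_p`) are observed exactly, so `Θ_a` is identified. For any other
pattern, the observed probability of `(a, ω, y, r)` is `∑_{x ↦ ω} Θ_a(y,x) ρ(r,a,x)`, and
since `Θ_a` has full column rank this linear system determines `ρ(r,a,·)` on each fiber
of `x ↦ x_obs`, hence everywhere. Then every cell is determined.
-/

open Finset

section Fibers

variable {α β γ R : Type*} [Fintype α] [DecidableEq γ]

theorem eq_of_sum_fiber_eq_of_injective [AddCommMonoid R] {obs : α → γ}
    (hobs : Function.Injective obs) {u v : α → R}
    (h : ∀ ω, ∑ x ∈ univ.filter (obs · = ω), u x = ∑ x ∈ univ.filter (obs · = ω), v x) :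
    u = v := by
  funext x
  have hfiber : univ.filter (obs · = obs x) = {x} := by ext; simp [hobs.eq_iff]
  simpa [hfiber] using h (obs x)

theorem eq_of_sum_fiber_mul_eq [CommRing R] {θ : α → β → R}
    (hθ : ∀ g : α → R, (∀ y, ∑ x, g x * θ x y = 0) → g = 0) (obs : α → γ) {d₁ d₂ : α → R}
    (h : ∀ ω y, ∑ x ∈ univ.filter (obs · = ω), θ x y * d₁ x =
      ∑ x ∈ univ.filter (obs · = ω), θ x y * d₂ x) :
    d₁ = d₂ := by
  funext x
  let g : α → R := fun x' => if obs x' = obs x then d₁ x' - d₂ x' else 0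
  have hg : g = 0 := by
    refine hθ g fun y => ?_
    calc ∑ x', g x' * θ x' y
        = ∑ x' ∈ univ.filter (obs · = obs x), (θ x' y * d₁ x' - θ x' y * d₂ x') := by
          rw [sum_filter]
          refine sum_congr rfl fun x' _ => ?_
          by_cases hx : obs x' = obs x
          · simp only [g, hx, if_true]; ring
          · simp only [g, hx, if_false, zero_mul]
      _ = 0 := by rw [sum_sub_distrib, h, sub_self]
  simpa [g, sub_eq_zero] using congrFun hg x

end Fibers

theorem eq_mul_odds_of_factorization {ι α β ℛ K : Type*} [Field K] {full : ℛ}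
    {f : ι → α → β → ℛ → K} {F : ι → α → β → K} {p : ℛ → ι → α → K}
    (hf : ∀ a x y r, f a x y r = F a x y * p r a x) (hp : ∀ a x, p full a x ≠ 0)
    (a : ι) (x : α) (y : β) (r : ℛ) :
    f a x y r = f a x y full * (p r a x / p full a x) := by
  rw [hf, hf, mul_assoc, mul_div_cancel₀ _ (hp a x)]

theorem discrete_identifiability_general
    {q K : ℕ} {ℛ : Type*} [Fintype ℛ] (full : ℛ)
    -- observed part of X under each missing pattern; the full pattern observes X itself
    {𝒪 : ℛ → Type*} [∀ r, DecidableEq (𝒪 r)]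
    (obs : ∀ r : ℛ, Fin q → 𝒪 r)
    (hobs_full : Function.Injective (obs full))
    -- two candidate joint pmfs of (A, X, Y, R)
    (f₁ f₂ : Bool → Fin q → Fin K → ℛ → ℝ)
    (c : ℝ) (hc : 0 < c)
    -- each is a pmf satisfying outcome-independent missingness and positivity:
    -- f(a,x,y,r) = f_{AXY}(a,x,y) · P(R=r | A=a, X=x) with P(full | a, x) ≥ c
    (hmodel : ∀ f ∈ ({f₁, f₂} : Set (Bool → Fin q → Fin K → ℛ → ℝ)),
      (∀ a x y r, 0 ≤ f a x y r) ∧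
      (∑ a : Bool, ∑ x : Fin q, ∑ y : Fin K, ∑ r : ℛ, f a x y r = 1) ∧
      ∃ fAXY : Bool → Fin q → Fin K → ℝ, ∃ pR : ℛ → Bool → Fin q → ℝ,
        (∀ r a x, 0 ≤ pR r a x) ∧ (∀ a x, ∑ r : ℛ, pR r a x = 1) ∧
        (∀ a x, c ≤ pR full a x) ∧
        (∀ a x y r, f a x y r = fAXY a x y * pR r a x))
    -- rank condition: the matrix Θ_a of complete-case probabilities (shared by f₁ and
    -- f₂, since the observed data agree) has full column rank, for a = 0, 1
    (hrank : ∀ a : Bool, ∀ g : Fin q → ℝ,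
      (∀ y : Fin K, ∑ x : Fin q, g x * f₁ a x y full = 0) → g = 0)
    -- the two joint distributions induce the same observed-data distribution
    (hobs_eq : ∀ a : Bool, ∀ r : ℛ, ∀ ω : 𝒪 r, ∀ y : Fin K,
      (∑ x ∈ Finset.univ.filter (fun x => obs r x = ω), f₁ a x y r) =
      (∑ x ∈ Finset.univ.filter (fun x => obs r x = ω), f₂ a x y r)) :
    f₁ = f₂ := by
  obtain ⟨-, -, F₁, p₁, -, -, hp₁c, hf₁⟩ := hmodel f₁ (Set.mem_insert _ _)
  obtain ⟨-, -, F₂, p₂, -, -, hp₂c, hf₂⟩ := hmodel f₂ (Set.mem_insert_of_mem _ rfl)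
  have hodds₁ := eq_mul_odds_of_factorization hf₁ fun a x => (hc.trans_le (hp₁c a x)).ne'
  have hodds₂ := eq_mul_odds_of_factorization hf₂ fun a x => (hc.trans_le (hp₂c a x)).ne'
  have hcomplete : ∀ a y, (f₁ a · y full) = (f₂ a · y full) := fun a y =>
    eq_of_sum_fiber_eq_of_injective hobs_full (hobs_eq a full · y)
  have hodds : ∀ a r, (fun x => p₁ r a x / p₁ full a x) = fun x => p₂ r a x / p₂ full a x := by
    refine fun a r => eq_of_sum_fiber_mul_eq (hrank a) (obs r) fun ω y => ?_
    simpa only [hodds₁ a _ y r, hodds₂ a _ y r, congrFun (hcomplete a y)] using hobs_eq a r ω y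
  funext a x y r
  rw [hodds₁, hodds₂, congrFun (hcomplete a y), congrFun (hodds a r)]

/-- Proposition 1: with discrete `X` (q values), `Y` (K values), binary
`A`, and a finite set of missing patterns `ℛ` with full pattern `full`, suppose each of
two joint pmfs satisfies outcome-independent missingness `R ⊥ Y | (A, X)` and
positivity `P(R=full | A, X, Y) ≥ c > 0`.  If the `K × q` matrices `Θ_a` built from
the complete-case probabilities have full column rank for `a = 0, 1`, and the two
joint distributions induce the same observed-data distribution (the distribution of
`(A, X_obs, Y, R)`, where under pattern `r` only the statistic `obs r` of `X` is
observed), then the two joint distributions are equal. -/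
theorem discrete_identifiability
    {q K : ℕ} {ℛ : Type*} [Fintype ℛ] (full : ℛ)
    -- observed part of X under each missing pattern; the full pattern observes X itself
    {𝒪 : ℛ → Type*} [∀ r, Fintype (𝒪 r)] [∀ r, DecidableEq (𝒪 r)]
    (obs : ∀ r : ℛ, Fin q → 𝒪 r)
    (hobs_full : Function.Injective (obs full))
    -- two candidate joint pmfs of (A, X, Y, R)
    (f₁ f₂ : Bool → Fin q → Fin K → ℛ → ℝ)
    (c : ℝ) (hc : 0 < c)
    -- each is a pmf satisfying outcome-independent missingness and positivity:
    -- f(a,x,y,r) = f_{AXY}(a,x,y) · P(R=r | A=a, X=x) with P(full | a, x) ≥ c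
    (hmodel : ∀ f ∈ ({f₁, f₂} : Set (Bool → Fin q → Fin K → ℛ → ℝ)),
      (∀ a x y r, 0 ≤ f a x y r) ∧
      (∑ a : Bool, ∑ x : Fin q, ∑ y : Fin K, ∑ r : ℛ, f a x y r = 1) ∧
      ∃ fAXY : Bool → Fin q → Fin K → ℝ, ∃ pR : ℛ → Bool → Fin q → ℝ,
        (∀ r a x, 0 ≤ pR r a x) ∧ (∀ a x, ∑ r : ℛ, pR r a x = 1) ∧
        (∀ a x, c ≤ pR full a x) ∧
        (∀ a x y r, f a x y r = fAXY a x y * pR r a x))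
    -- rank condition: the matrix Θ_a of complete-case probabilities (shared by f₁ and
    -- f₂, since the observed data agree) has full column rank, for a = 0, 1
    (hrank : ∀ a : Bool, ∀ g : Fin q → ℝ,
      (∀ y : Fin K, ∑ x : Fin q, g x * f₁ a x y full = 0) → g = 0)
    -- the two joint distributions induce the same observed-data distribution
    (hobs_eq : ∀ a : Bool, ∀ r : ℛ, ∀ ω : 𝒪 r, ∀ y : Fin K,
      (∑ x ∈ Finset.univ.filter (fun x => obs r x = ω), f₁ a x y r) =
      (∑ x ∈ Finset.univ.filter (fun x => obs r x = ω), f₂ a x y r)) :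
    f₁ = f₂ :=
  discrete_identifiability_general full obs hobs_full f₁ f₂ c hc hmodel hrank hobs_eq
end

section
/- If f(A=1, X, Y, R=1_p) is bounded complete in Y, then the propensity score e(X) = P(A=1 | X) satisfies e(X) > 0 almost surely. In particular, for discrete X with P(X = x*) > 0: if P(A=1 | X = x*) = 0, then the column of Θ_1 corresponding to x* is zero, so Θ_1 fails to have full column rank and bounded completeness fails. -/
/-- if the (discrete) kernel `f(A=1, X, Y, R=1_p)`, which factors as
`f(A=1, x, y, R=1_p) = e(x) · f(X=x, Y=y) · P(R=1_p | X=x, Y=y, A=1)`, is bounded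
complete in `Y`, then the propensity score `e(x) = P(A=1 | X=x)` is strictly positive
for every `x`.  (If `e(x*) = 0` the column of `Θ₁` indexed by `x*` vanishes, so `Θ₁`
fails to have full column rank and bounded completeness fails.) -/
theorem propensity_pos_of_boundedComplete
    {𝒳 𝒴 : Type*} [Fintype 𝒳] [Fintype 𝒴]
    (e : 𝒳 → ℝ)                       -- propensity score P(A=1 | X=x)
    (fXY : 𝒳 → 𝒴 → ℝ)                 -- joint pmf of (X, Y)
    (pR : 𝒳 → 𝒴 → ℝ)                  -- P(R=1_p | X, Y, A=1)
    (fA1 : 𝒳 → 𝒴 → ℝ)                 -- f(A=1, X=x, Y=y, R=1_p)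
    (hfact : ∀ x y, fA1 x y = e x * fXY x y * pR x y)
    (he_nonneg : ∀ x, 0 ≤ e x)
    (hcomplete : ∀ g : 𝒳 → ℝ, (∀ y : 𝒴, ∑ x : 𝒳, g x * fA1 x y = 0) → g = 0) :
    ∀ x, 0 < e x := by
  classical
  intro x
  rcases (he_nonneg x).lt_or_eq with h | h
  · exact h
  exfalso
  have hg := hcomplete (fun z => if z = x then 1 else 0) (fun y => by
    rw [Finset.sum_eq_single x]
    · simp [hfact, ← h]
    · intro b _ hb; simp [hb]
    · simp)
  have := congrFun hg x
  simp at this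
end

section
/- Assume {Y(0), Y(1)} ⊥ A | X and R ⊥ Y | (A, X), where Y = A·Y(1) + (1−A)·Y(0). Then the conditional average treatment effect τ(X) = E[Y(1) − Y(0) | X] equals E(Y | A=1, X, R=1_p) − E(Y | A=0, X, R=1_p), i.e., it is identified from complete cases, provided P(A=a, R=1_p | X) > 0 a.s. for a = 0,1. -/
/-!
Fix an arm `a` and write `σ(X)` for the σ-algebra of the covariates. If `Z` is conditionally
independent of a σ-algebra `m₁` given `m'`, then `E[Z | m' ⊔ m₁] = E[Z | m']`. Applied first to
`R ⊥ Y | (A, X)` and then to `A ⊥ Y(a) | X`, this turns the integral of `Y` over the complete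
cases of arm `a` with `X ∈ s` into `∫_{X ∈ s} P(A = a, R = 1_p | X) E[Y(a) | X]`, while the same
integral of `g_a(X)` is `∫_{X ∈ s} P(A = a, R = 1_p | X) g_a(X)`. So the two products agree a.s.,
and as the weight is positive, `E[Y(a) | X] = g_a(X)`. Subtracting the two arms identifies `τ`.
-/

open MeasureTheory ProbabilityTheory

section PullOut

variable {Ω : Type*} {m mΩ : MeasurableSpace Ω} {μ : Measure Ω}

theorem setIntegral_mul_condExp (hm : m ≤ mΩ) [SigmaFinite (μ.trim hm)] {h F : Ω → ℝ}
    (hh : StronglyMeasurable[m] h) (hhF : Integrable (h * F) μ) (hF : Integrable F μ)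
    {C : Set Ω} (hC : MeasurableSet[m] C) :
    ∫ ω in C, h ω * μ[F | m] ω ∂μ = ∫ ω in C, h ω * F ω ∂μ :=
  (setIntegral_congr_ae (hm C hC) ((condExp_mul_of_stronglyMeasurable_left hh hhF hF).mono
    fun _ hω _ => hω.symm)).trans (setIntegral_condExp hm hhF hC)

theorem condExp_ae_eq_of_eqOn {E : Type*} [NormedAddCommGroup E] [NormedSpace ℝ E]
    [CompleteSpace E] {f g : Ω → E} (hf : Integrable f μ) (hg : Integrable g μ)
    {D : Set Ω} (hD : MeasurableSet[m] D) (hfg : Set.EqOn f g D) :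
    ∀ᵐ ω ∂μ, ω ∈ D → μ[f | m] ω = μ[g | m] ω := by
  filter_upwards [condExp_indicator hf hD, condExp_indicator hg hD] with ω hfω hgω hω
  rw [← Set.indicator_of_mem hω (μ[f | m]), ← Set.indicator_of_mem hω (μ[g | m]), ← hfω, ← hgω,
    Set.indicator_congr hfg]

variable [IsFiniteMeasure μ]

theorem ae_norm_condExp_indicator_le_one (hm : m ≤ mΩ) {s : Set Ω} (hs : MeasurableSet s) :
    ∀ᵐ ω ∂μ, ‖(μ⟦s | m⟧) ω‖ ≤ 1 := by
  have h_le : μ⟦s | m⟧ ≤ᵐ[μ] μ[fun _ => (1 : ℝ) | m] :=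
    condExp_mono ((integrable_const 1).indicator hs) (integrable_const 1)
      (.of_forall (Set.indicator_le_self' fun _ _ => zero_le_one))
  rw [condExp_const hm] at h_le
  filter_upwards [h_le, condExp_nonneg (m := m) (μ := μ)
    (.of_forall (Set.indicator_nonneg fun _ _ => zero_le_one : 0 ≤ s.indicator fun _ => (1 : ℝ)))]
    with ω h1 h0
  rw [Real.norm_of_nonneg h0]; exact h1

theorem setIntegral_condExp_indicator_mul (hm : m ≤ mΩ) {h : Ω → ℝ}
    (hh : StronglyMeasurable[m] h) (hint : Integrable h μ) {s C : Set Ω} (hs : MeasurableSet s)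
    (hC : MeasurableSet[m] C) :
    ∫ ω in C, (μ⟦s | m⟧) ω * h ω ∂μ = ∫ ω in C ∩ s, h ω ∂μ := by
  simp_rw [mul_comm _ (h _)]
  have hmul : h * s.indicator (fun _ => (1 : ℝ)) = s.indicator h := by
    ext ω; by_cases hω : ω ∈ s <;> simp [hω]
  rw [setIntegral_mul_condExp hm hh (hmul ▸ hint.indicator hs)
    ((integrable_const 1).indicator hs) hC, ← setIntegral_indicator hs]
  exact setIntegral_congr_fun (hm C hC) fun ω _ => congrFun hmul ω

end PullOut

section SetIntegralUnique

variable {Ω E : Type*} [NormedAddCommGroup E] [NormedSpace ℝ E] {m₁ m₂ mΩ : MeasurableSpace Ω}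

theorem isPiSystem_image2_inter :
    IsPiSystem (Set.image2 (· ∩ ·) {s | MeasurableSet[m₁] s} {t | MeasurableSet[m₂] t}) := by
  rintro _ ⟨s₁, hs₁, t₁, ht₁, rfl⟩ _ ⟨s₂, hs₂, t₂, ht₂, rfl⟩ _
  exact ⟨s₁ ∩ s₂, hs₁.inter hs₂, t₁ ∩ t₂, ht₁.inter ht₂, Set.inter_inter_inter_comm _ _ _ _⟩

theorem sup_eq_generateFrom_image2_inter :
    m₁ ⊔ m₂ = MeasurableSpace.generateFrom
      (Set.image2 (· ∩ ·) {s | MeasurableSet[m₁] s} {t | MeasurableSet[m₂] t}) := by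
  refine le_antisymm (sup_le (fun s hs => ?_) (fun t ht => ?_))
    (MeasurableSpace.generateFrom_le ?_)
  · exact MeasurableSpace.measurableSet_generateFrom ⟨s, hs, Set.univ, .univ, Set.inter_univ s⟩
  · exact MeasurableSpace.measurableSet_generateFrom ⟨Set.univ, .univ, t, ht, Set.univ_inter t⟩
  · rintro _ ⟨s, hs, t, ht, rfl⟩
    exact (le_sup_left (b := m₂) s hs).inter (le_sup_right (a := m₁) t ht)

theorem setIntegral_eq_of_forall_inter {μ : Measure Ω} (hm₁ : m₁ ≤ mΩ) (hm₂ : m₂ ≤ mΩ)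
    {f g : Ω → E} (hf : Integrable f μ) (hg : Integrable g μ)
    (hfg : ∀ s t, MeasurableSet[m₁] s → MeasurableSet[m₂] t →
      ∫ ω in s ∩ t, f ω ∂μ = ∫ ω in s ∩ t, g ω ∂μ)
    {u : Set Ω} (hu : MeasurableSet[m₁ ⊔ m₂] u) : ∫ ω in u, f ω ∂μ = ∫ ω in u, g ω ∂μ := by
  have hle : m₁ ⊔ m₂ ≤ mΩ := sup_le hm₁ hm₂
  induction u, hu using MeasurableSpace.induction_on_inter sup_eq_generateFrom_image2_inter
    isPiSystem_image2_inter with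
  | empty => simp
  | basic _ h => obtain ⟨s, hs, t, ht, rfl⟩ := h; exact hfg s t hs ht
  | compl u hu ih =>
    have hint : ∫ ω, f ω ∂μ = ∫ ω, g ω ∂μ := by
      simpa using hfg Set.univ Set.univ .univ .univ
    rw [← integral_add_compl (hle u hu) hf, ← integral_add_compl (hle u hu) hg, ih] at hint
    exact add_left_cancel hint
  | iUnion u hdisj hu ih =>
    rw [integral_iUnion (fun i => hle _ (hu i)) hdisj hf.integrableOn,
      integral_iUnion (fun i => hle _ (hu i)) hdisj hg.integrableOn]
    exact tsum_congr ih

end SetIntegralUnique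

section CondIndep

variable {Ω : Type*} {m' m₁ mΩ : MeasurableSpace Ω} [StandardBorelSpace Ω]
  {μ : Measure Ω} [IsFiniteMeasure μ] {hm' : m' ≤ mΩ}

theorem measureReal_inter_eq_setIntegral_condExp {m₂ : MeasurableSpace Ω} (hm₁ : m₁ ≤ mΩ)
    (hm₂ : m₂ ≤ mΩ) (hind : CondIndep m' m₁ m₂ hm' μ) {C D E : Set Ω}
    (hC : MeasurableSet[m'] C) (hD : MeasurableSet[m₁] D) (hE : MeasurableSet[m₂] E) :
    μ.real (C ∩ (D ∩ E)) = ∫ ω in C ∩ E, (μ⟦D | m'⟧) ω ∂μ := by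
  have hDE : MeasurableSet[mΩ] (D ∩ E) := (hm₁ D hD).inter (hm₂ E hE)
  calc μ.real (C ∩ (D ∩ E)) = ∫ ω in C, (μ⟦D ∩ E | m'⟧) ω ∂μ := by
        rw [setIntegral_condExp hm' ((integrable_const (1 : ℝ)).indicator hDE) hC,
          setIntegral_indicator hDE, setIntegral_const, smul_eq_mul, mul_one]
    _ = ∫ ω in C, (μ⟦E | m'⟧) ω * (μ⟦D | m'⟧) ω ∂μ :=
        setIntegral_congr_ae (hm' C hC)
          (((condIndep_iff m' m₁ m₂ hm' hm₁ hm₂ μ).mp hind D E hD hE).mono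
            fun _ h _ => h.trans (mul_comm _ _))
    _ = ∫ ω in C ∩ E, (μ⟦D | m'⟧) ω ∂μ :=
        setIntegral_condExp_indicator_mul hm' stronglyMeasurable_condExp integrable_condExp
          (hm₂ E hE) hC

theorem setIntegral_inter_eq_setIntegral_condExp_mul (hm₁ : m₁ ≤ mΩ) {Z : Ω → ℝ}
    (hZ : Measurable Z) (hind : CondIndep m' m₁ (MeasurableSpace.comap Z inferInstance) hm' μ)
    {C D : Set Ω} (hC : MeasurableSet[m'] C) (hD : MeasurableSet[m₁] D) :
    ∫ ω in C ∩ D, Z ω ∂μ = ∫ ω in C, (μ⟦D | m'⟧) ω * Z ω ∂μ := by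
  set κ := μ⟦D | m'⟧
  have hκ_nonneg : 0 ≤ᵐ[μ] κ :=
    condExp_nonneg (.of_forall (Set.indicator_nonneg fun _ _ => zero_le_one))
  -- both sides are means of `Z`, under `μ` on `C ∩ D` and under `κ • μ` on `C`, and by the
  -- set-level identity the two laws of `Z` agree
  have hlaw : (μ.restrict (C ∩ D)).map Z
      = ((μ.restrict C).withDensity fun ω => ENNReal.ofReal (κ ω)).map Z := by
    ext u hu
    rw [Measure.map_apply hZ hu, Measure.map_apply hZ hu, withDensity_apply _ (hZ hu),
      Measure.restrict_apply (hZ hu), Measure.restrict_restrict (hZ hu), Set.inter_comm _ C,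
      ← ofReal_integral_eq_lintegral_ofReal integrable_condExp.integrableOn
        (ae_restrict_of_ae hκ_nonneg),
      ← measureReal_inter_eq_setIntegral_condExp hm₁ hZ.comap_le hind hC hD ⟨u, hu, rfl⟩,
      measureReal_def, ENNReal.ofReal_toReal (measure_ne_top μ _)]
    congr 1; ext ω; simp only [Set.mem_inter_iff]; tauto
  calc ∫ ω in C ∩ D, Z ω ∂μ = ∫ y, y ∂(μ.restrict (C ∩ D)).map Z :=
        (integral_map hZ.aemeasurable aestronglyMeasurable_id).symm
    _ = ∫ ω, Z ω ∂(μ.restrict C).withDensity fun ω => ENNReal.ofReal (κ ω) := by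
        rw [hlaw]; exact integral_map hZ.aemeasurable aestronglyMeasurable_id
    _ = ∫ ω in C, (κ ω).toNNReal • Z ω ∂μ :=
        integral_withDensity_eq_integral_smul
          (stronglyMeasurable_condExp.mono hm').measurable.real_toNNReal _
    _ = ∫ ω in C, κ ω * Z ω ∂μ := by
        refine setIntegral_congr_ae (hm' C hC) (hκ_nonneg.mono fun ω h0 _ => ?_)
        simp [NNReal.smul_def, Real.coe_toNNReal _ h0]

theorem condExp_sup_ae_eq_of_condIndep (hm₁ : m₁ ≤ mΩ) {Z : Ω → ℝ} (hZ : Measurable Z)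
    (hZint : Integrable Z μ)
    (hind : CondIndep m' m₁ (MeasurableSpace.comap Z inferInstance) hm' μ) :
    μ[Z | m' ⊔ m₁] =ᵐ[μ] μ[Z | m'] := by
  refine (ae_eq_condExp_of_forall_setIntegral_eq (sup_le hm' hm₁) hZint
    (fun _ _ _ => integrable_condExp.integrableOn) (fun u hu _ => ?_)
    (stronglyMeasurable_condExp.mono (le_sup_left (b := m₁))).aestronglyMeasurable).symm
  refine setIntegral_eq_of_forall_inter hm' hm₁ integrable_condExp hZint (fun C D hC hD => ?_) hu
  have hκZ : Integrable (μ⟦D | m'⟧ * Z) μ :=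
    hZint.bdd_mul (stronglyMeasurable_condExp.mono hm').aestronglyMeasurable
      (ae_norm_condExp_indicator_le_one hm' (hm₁ D hD))
  rw [← setIntegral_condExp_indicator_mul hm' stronglyMeasurable_condExp integrable_condExp
    (hm₁ D hD) hC, setIntegral_inter_eq_setIntegral_condExp_mul hm₁ hZ hind hC hD]
  exact setIntegral_mul_condExp hm' stronglyMeasurable_condExp hκZ hZint hC

end CondIndep

theorem MeasurableSpace.comap_prodMk_eq_sup {Ω α β : Type*} [MeasurableSpace α]
    [MeasurableSpace β] (f : Ω → α) (g : Ω → β) :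
    MeasurableSpace.comap (fun ω => (f ω, g ω)) inferInstance =
      MeasurableSpace.comap f inferInstance ⊔ MeasurableSpace.comap g inferInstance := by
  change MeasurableSpace.comap _ (MeasurableSpace.prod _ _) = _
  rw [MeasurableSpace.prod, MeasurableSpace.comap_sup, MeasurableSpace.comap_comp,
    MeasurableSpace.comap_comp]
  rfl

theorem integrable_of_setIntegral_sublevelSet_le {Ω : Type*} [MeasurableSpace Ω]
    {μ : Measure Ω} [IsFiniteMeasure μ] {f : Ω → ℝ} (hf : Measurable f)
    (h0 : 0 ≤ᵐ[μ] f) {c : ℝ} (hc : ∀ n : ℕ, ∫ ω in {ω | f ω ≤ n}, f ω ∂μ ≤ c) :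
    Integrable f μ := by
  have hsub : ∀ n : ℕ, IntegrableOn f {ω | f ω ≤ n} μ := fun n =>
    Measure.integrableOn_of_bounded (M := n) (measure_ne_top μ _) hf.aestronglyMeasurable
      (by filter_upwards [ae_restrict_mem (measurableSet_le hf measurable_const),
        ae_restrict_of_ae h0] with ω hn hω using (Real.norm_of_nonneg hω).trans_le hn)
  have hcover : ⋃ n : ℕ, {ω | f ω ≤ n} = Set.univ :=
    Set.eq_univ_of_forall fun ω => Set.mem_iUnion.mpr (exists_nat_ge (f ω))
  have hmono : Monotone fun n : ℕ => {ω | f ω ≤ n} := fun n k hnk ω (hω : f ω ≤ n) =>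
    hω.trans (Nat.cast_le.mpr hnk)
  refine ⟨hf.aestronglyMeasurable, (hasFiniteIntegral_iff_ofReal h0).mpr ?_⟩
  calc ∫⁻ ω, ENNReal.ofReal (f ω) ∂μ
      = ⨆ n : ℕ, ∫⁻ ω in {ω | f ω ≤ n}, ENNReal.ofReal (f ω) ∂μ := by
        rw [← setLIntegral_iUnion_of_directed _ hmono.directed_le, hcover, Measure.restrict_univ]
    _ ≤ ENNReal.ofReal c := iSup_le fun n => by
        rw [← ofReal_integral_eq_lintegral_ofReal (hsub n) (ae_restrict_of_ae h0)]
        exact ENNReal.ofReal_le_ofReal (hc n)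
    _ < ⊤ := ENNReal.ofReal_lt_top

section CompleteCase

variable {Ω 𝒳 𝒜 ℛ : Type*} [mΩ : MeasurableSpace Ω] [MeasurableSpace 𝒳]
  {μ : Measure Ω} [IsFiniteMeasure μ] {X : Ω → 𝒳}

theorem ae_eq_condExp_indicator_of_measureReal_inter (hX : Measurable X) {S : Set Ω}
    (hS : MeasurableSet S) {p : 𝒳 → ℝ} (hp : Measurable p) (hp_nonneg : ∀ᵐ ω ∂μ, 0 ≤ p (X ω))
    (hp_ver : ∀ s, MeasurableSet s → μ.real (X ⁻¹' s ∩ S) = ∫ ω in X ⁻¹' s, p (X ω) ∂μ) :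
    (fun ω => p (X ω)) =ᵐ[μ] μ⟦S | MeasurableSpace.comap X inferInstance⟧ := by
  -- integrability of `p ∘ X` is not assumed: its integrals over sublevel sets are measures
  have hpX_int : Integrable (fun ω => p (X ω)) μ :=
    integrable_of_setIntegral_sublevelSet_le (hp.comp hX) hp_nonneg (c := μ.real Set.univ)
      fun _ => (hp_ver _ (measurableSet_le hp measurable_const)).symm.trans_le
        (measureReal_mono (Set.subset_univ _))
  refine ae_eq_condExp_of_forall_setIntegral_eq hX.comap_le
    ((integrable_const (1 : ℝ)).indicator hS) (fun _ _ _ => hpX_int.integrableOn) ?_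
    (hp.comp (Measurable.of_comap_le le_rfl)).stronglyMeasurable.aestronglyMeasurable
  rintro _ ⟨s, hs, rfl⟩ _
  rw [← hp_ver s hs, setIntegral_indicator hS, setIntegral_const, smul_eq_mul, mul_one]

variable [StandardBorelSpace Ω] [MeasurableSpace 𝒜] [MeasurableSingletonClass 𝒜]
  [MeasurableSpace ℛ] [MeasurableSingletonClass ℛ] {A : Ω → 𝒜} {R : Ω → ℛ}

theorem setIntegral_completeCase_eq_setIntegral_condExp (hA : Measurable A) (hX : Measurable X)
    (hR : Measurable R) {Y Ya : Ω → ℝ} (hY : Measurable Y) (hYa : Measurable Ya)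
    (hY_int : Integrable Y μ) (hYa_int : Integrable Ya μ) {a : 𝒜} (full : ℛ)
    (hY_eq : ∀ ω, A ω = a → Y ω = Ya ω)
    (hunconf : CondIndepFun (MeasurableSpace.comap X inferInstance) hX.comap_le A Ya μ)
    (hOIM : CondIndepFun (MeasurableSpace.comap (fun ω => (A ω, X ω)) inferInstance)
      (hA.prodMk hX).comap_le R Y μ)
    {s : Set 𝒳} (hs : MeasurableSet s) :
    ∫ ω in X ⁻¹' s ∩ (A ⁻¹' {a} ∩ R ⁻¹' {full}), Y ω ∂μ =
      ∫ ω in X ⁻¹' s, (μ⟦A ⁻¹' {a} ∩ R ⁻¹' {full} | MeasurableSpace.comap X inferInstance⟧) ω *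
        μ[Ya | MeasurableSpace.comap X inferInstance] ω ∂μ := by
  have hmAX := MeasurableSpace.comap_prodMk_eq_sup A X
  have hS : MeasurableSet (A ⁻¹' {a} ∩ R ⁻¹' {full}) :=
    (hA (measurableSet_singleton a)).inter (hR (measurableSet_singleton full))
  have hcc : MeasurableSet[MeasurableSpace.comap (fun ω => (A ω, X ω)) inferInstance ⊔
      MeasurableSpace.comap R inferInstance] (X ⁻¹' s ∩ (A ⁻¹' {a} ∩ R ⁻¹' {full})) := by
    rw [← Set.inter_assoc]
    refine .inter (le_sup_left (b := MeasurableSpace.comap R inferInstance)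
      _ ⟨{a} ×ˢ s, (measurableSet_singleton a).prod hs, ?_⟩)
      (le_sup_right (a := MeasurableSpace.comap (fun ω => (A ω, X ω)) inferInstance)
        _ ⟨{full}, measurableSet_singleton full, rfl⟩)
    ext ω; simp [and_comm]
  have hY_AXR := condExp_sup_ae_eq_of_condIndep hR.comap_le hY hY_int hOIM
  have hY_Ya : ∀ᵐ ω ∂μ, ω ∈ A ⁻¹' {a} →
      μ[Y | MeasurableSpace.comap (fun ω => (A ω, X ω)) inferInstance] ω =
        μ[Ya | MeasurableSpace.comap (fun ω => (A ω, X ω)) inferInstance] ω := by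
    refine condExp_ae_eq_of_eqOn hY_int hYa_int ?_ hY_eq
    rw [hmAX]
    exact le_sup_left (b := MeasurableSpace.comap X inferInstance) _
      ⟨{a}, measurableSet_singleton a, rfl⟩
  have hYa_AX : μ[Ya | MeasurableSpace.comap (fun ω => (A ω, X ω)) inferInstance] =ᵐ[μ]
      μ[Ya | MeasurableSpace.comap X inferInstance] := by
    rw [hmAX, sup_comm]
    exact condExp_sup_ae_eq_of_condIndep hA.comap_le hYa hYa_int hunconf
  calc ∫ ω in X ⁻¹' s ∩ (A ⁻¹' {a} ∩ R ⁻¹' {full}), Y ω ∂μ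
      = ∫ ω in X ⁻¹' s ∩ (A ⁻¹' {a} ∩ R ⁻¹' {full}),
          μ[Y | MeasurableSpace.comap (fun ω => (A ω, X ω)) inferInstance ⊔
            MeasurableSpace.comap R inferInstance] ω ∂μ :=
        (setIntegral_condExp (sup_le (hA.prodMk hX).comap_le hR.comap_le) hY_int hcc).symm
    _ = ∫ ω in X ⁻¹' s ∩ (A ⁻¹' {a} ∩ R ⁻¹' {full}),
          μ[Ya | MeasurableSpace.comap X inferInstance] ω ∂μ := by
        refine setIntegral_congr_ae ((hX hs).inter hS) ?_
        filter_upwards [hY_AXR, hY_Ya, hYa_AX] with ω h₁ h₂ h₃ hω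
        rw [h₁, h₂ hω.2.1, h₃]
    _ = _ := (setIntegral_condExp_indicator_mul hX.comap_le stronglyMeasurable_condExp
          integrable_condExp hS ⟨s, hs, rfl⟩).symm

theorem condExp_ae_eq_completeCase_mean (hA : Measurable A) (hX : Measurable X)
    (hR : Measurable R) {Y Ya : Ω → ℝ} (hY : Measurable Y) (hYa : Measurable Ya)
    (hY_int : Integrable Y μ) (hYa_int : Integrable Ya μ) {a : 𝒜} {full : ℛ}
    (hY_eq : ∀ ω, A ω = a → Y ω = Ya ω)
    (hunconf : CondIndepFun (MeasurableSpace.comap X inferInstance) hX.comap_le A Ya μ)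
    (hOIM : CondIndepFun (MeasurableSpace.comap (fun ω => (A ω, X ω)) inferInstance)
      (hA.prodMk hX).comap_le R Y μ)
    {p : 𝒳 → ℝ} (hp : Measurable p)
    (hp_ver : ∀ s : Set 𝒳, MeasurableSet s →
      (μ {ω | A ω = a ∧ R ω = full ∧ X ω ∈ s}).toReal = ∫ ω in X ⁻¹' s, p (X ω) ∂μ)
    (hp_pos : ∀ᵐ ω ∂μ, 0 < p (X ω))
    {g : 𝒳 → ℝ} (hg : Measurable g) (hg_int : Integrable (fun ω => g (X ω)) μ)
    (hg_ver : ∀ s : Set 𝒳, MeasurableSet s →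
      ∫ ω in {ω | A ω = a ∧ R ω = full ∧ X ω ∈ s}, Y ω ∂μ =
        ∫ ω in {ω | A ω = a ∧ R ω = full ∧ X ω ∈ s}, g (X ω) ∂μ) :
    μ[Ya | MeasurableSpace.comap X inferInstance] =ᵐ[μ] fun ω => g (X ω) := by
  have hS : MeasurableSet (A ⁻¹' {a} ∩ R ⁻¹' {full}) :=
    (hA (measurableSet_singleton a)).inter (hR (measurableSet_singleton full))
  have hcc : ∀ s, {ω | A ω = a ∧ R ω = full ∧ X ω ∈ s} = X ⁻¹' s ∩ (A ⁻¹' {a} ∩ R ⁻¹' {full}) :=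
    fun s => by ext ω; simp only [Set.mem_ofPred_eq, Set.mem_inter_iff, Set.mem_preimage,
      Set.mem_singleton_iff]; tauto
  simp_rw [hcc] at hp_ver hg_ver
  have hmX : MeasurableSpace.comap X inferInstance ≤ mΩ := hX.comap_le
  have hgX : StronglyMeasurable[MeasurableSpace.comap X inferInstance] fun ω => g (X ω) :=
    (hg.comp (Measurable.of_comap_le le_rfl)).stronglyMeasurable
  have hκ_bdd := ae_norm_condExp_indicator_le_one (μ := μ) hmX hS
  have hκ : AEStronglyMeasurable
      (μ⟦A ⁻¹' {a} ∩ R ⁻¹' {full} | MeasurableSpace.comap X inferInstance⟧) μ :=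
    (stronglyMeasurable_condExp.mono hmX).aestronglyMeasurable
  have hweighted :
      (fun ω => (μ⟦A ⁻¹' {a} ∩ R ⁻¹' {full} | MeasurableSpace.comap X inferInstance⟧) ω *
        μ[Ya | MeasurableSpace.comap X inferInstance] ω) =ᵐ[μ]
      fun ω => (μ⟦A ⁻¹' {a} ∩ R ⁻¹' {full} | MeasurableSpace.comap X inferInstance⟧) ω *
        g (X ω) := by
    refine ae_eq_of_forall_setIntegral_eq_of_sigmaFinite' hmX
      (fun _ _ _ => (integrable_condExp.bdd_mul hκ hκ_bdd).integrableOn)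
      (fun _ _ _ => (hg_int.bdd_mul hκ hκ_bdd).integrableOn) ?_
      (stronglyMeasurable_condExp.mul stronglyMeasurable_condExp).aestronglyMeasurable
      (stronglyMeasurable_condExp.mul hgX).aestronglyMeasurable
    rintro _ ⟨s, hs, rfl⟩ _
    rw [← setIntegral_completeCase_eq_setIntegral_condExp hA hX hR hY hYa hY_int hYa_int full
        hY_eq hunconf hOIM hs, hg_ver s hs,
      setIntegral_condExp_indicator_mul hmX hgX hg_int hS ⟨s, hs, rfl⟩]
  have hpS := ae_eq_condExp_indicator_of_measureReal_inter hX hS hp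
    (hp_pos.mono fun _ h => h.le) hp_ver
  filter_upwards [hweighted, hpS, hp_pos] with ω h hpω hpos
  rw [← hpω] at h
  exact mul_left_cancel₀ hpos.ne' h

end CompleteCase

/-- under unconfoundedness `(Y(0),Y(1)) ⊥ A | X`, outcome-independent
missingness `R ⊥ Y | (A, X)`, and positivity `P(A=a, R=1_p | X) > 0` a.s., the
conditional average treatment effect `τ(X) = E[Y(1) − Y(0) | X]` equals the
complete-case contrast `E(Y | A=1, X, R=1_p) − E(Y | A=0, X, R=1_p)`. -/
theorem cate_complete_case_identification
    {Ω 𝒳 ℛ : Type*} [MeasurableSpace Ω] [StandardBorelSpace Ω]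
    [MeasurableSpace 𝒳] [MeasurableSpace ℛ] [MeasurableSingletonClass ℛ]
    (μ : Measure Ω) [IsProbabilityMeasure μ]
    (A : Ω → Bool) (X : Ω → 𝒳) (R : Ω → ℛ) (Y0 Y1 : Ω → ℝ)
    (hA : Measurable A) (hX : Measurable X) (hR : Measurable R)
    (hY0 : Measurable Y0) (hY1 : Measurable Y1)
    (hint0 : Integrable Y0 μ) (hint1 : Integrable Y1 μ)
    (Y : Ω → ℝ) (hY : Y = fun ω => if A ω then Y1 ω else Y0 ω)
    (full : ℛ)
    -- unconfoundedness: (Y(0), Y(1)) ⊥ A | X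
    (hunconf : CondIndepFun (MeasurableSpace.comap X inferInstance) hX.comap_le
      (fun ω => (Y0 ω, Y1 ω)) A μ)
    -- outcome-independent missingness: R ⊥ Y | (A, X)
    (hOIM : CondIndepFun
      (MeasurableSpace.comap (fun ω => (A ω, X ω)) inferInstance)
      (Measurable.comap_le (hA.prodMk hX)) R Y μ)
    -- positivity: P(A=a, R=1_p | X) > 0 a.s., via versions p a of these probabilities
    (p : Bool → 𝒳 → ℝ) (hpm : ∀ a, Measurable (p a))
    (hp_ver : ∀ a : Bool, ∀ s : Set 𝒳, MeasurableSet s →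
      (μ {ω | A ω = a ∧ R ω = full ∧ X ω ∈ s}).toReal =
        ∫ ω in X ⁻¹' s, p a (X ω) ∂μ)
    (hp_pos : ∀ a : Bool, ∀ᵐ ω ∂μ, 0 < p a (X ω))
    -- τX is a version of E[Y(1) − Y(0) | X]
    (τX : 𝒳 → ℝ) (hτXm : Measurable τX)
    (hτX_int : Integrable (fun ω => τX (X ω)) μ)
    (hτX_ver : ∀ s : Set 𝒳, MeasurableSet s →
      ∫ ω in X ⁻¹' s, (Y1 ω - Y0 ω) ∂μ = ∫ ω in X ⁻¹' s, τX (X ω) ∂μ)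
    -- g a is a version of E(Y | A=a, X, R=1_p), as a function of X
    (g1 g0 : 𝒳 → ℝ) (hg1m : Measurable g1) (hg0m : Measurable g0)
    (hg1int : Integrable (fun ω => g1 (X ω)) μ)
    (hg0int : Integrable (fun ω => g0 (X ω)) μ)
    (hg1 : ∀ s : Set 𝒳, MeasurableSet s →
      ∫ ω in {ω | A ω = true ∧ R ω = full ∧ X ω ∈ s}, Y ω ∂μ =
        ∫ ω in {ω | A ω = true ∧ R ω = full ∧ X ω ∈ s}, g1 (X ω) ∂μ)
    (hg0 : ∀ s : Set 𝒳, MeasurableSet s →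
      ∫ ω in {ω | A ω = false ∧ R ω = full ∧ X ω ∈ s}, Y ω ∂μ =
        ∫ ω in {ω | A ω = false ∧ R ω = full ∧ X ω ∈ s}, g0 (X ω) ∂μ) :
    τX =ᵐ[μ.map X] fun x => g1 x - g0 x := by
  subst hY
  have hYm : Measurable fun ω => if A ω then Y1 ω else Y0 ω :=
    Measurable.ite (hA (measurableSet_singleton true)) hY1 hY0
  have hY_int : Integrable (fun ω => if A ω then Y1 ω else Y0 ω) μ :=
    (hint1.norm.add hint0.norm).mono' hYm.aestronglyMeasurable
      (.of_forall fun ω => by split_ifs <;> simp)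
  have harm1 := condExp_ae_eq_completeCase_mean hA hX hR hYm hY1 hY_int hint1 (a := true)
    (fun ω h => if_pos h) (hunconf.comp measurable_snd measurable_id).symm hOIM (hpm true)
    (hp_ver true) (hp_pos true) hg1m hg1int hg1
  have harm0 := condExp_ae_eq_completeCase_mean hA hX hR hYm hY0 hY_int hint0 (a := false)
    (fun ω h => if_neg (by simp [h])) (hunconf.comp measurable_fst measurable_id).symm hOIM
    (hpm false) (hp_ver false) (hp_pos false) hg0m hg0int hg0
  have hτ : (fun ω => τX (X ω)) =ᵐ[μ] μ[Y1 - Y0 | MeasurableSpace.comap X inferInstance] :=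
    ae_eq_condExp_of_forall_setIntegral_eq hX.comap_le (hint1.sub hint0)
      (fun _ _ _ => hτX_int.integrableOn) (by rintro _ ⟨s, hs, rfl⟩ _; exact (hτX_ver s hs).symm)
      (hτXm.comp (Measurable.of_comap_le le_rfl)).stronglyMeasurable.aestronglyMeasurable
  refine (ae_map_iff hX.aemeasurable (measurableSet_eq_fun hτXm (hg1m.sub hg0m))).mpr ?_
  filter_upwards [hτ, condExp_sub hint1 hint0 _, harm1, harm0] with ω hτω hsub h1 h0
  rw [hτω, hsub, Pi.sub_apply, h1, h0]
  rfl
end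

section
/- Under unconfoundedness, outcome-independent missingness, and positivity of P(R=1_p | A=a, X) for a = 0,1, the marginal density of X is identified by f(X) = Σ_{a=0}^{1} f(A=a, X, R=1_p) / P(R=1_p | A=a, X), and consequently the average treatment effect satisfies τ = Σ_{a=0}^{1} ∫ τ(X) · f(A=a, X, R=1_p) / P(R=1_p | A=a, X) dν(X). -/
/-!
Fix `a`. The law of `X` on `{A = a, R = 1_p}` has `ν`-density `qd a`, and with respect to the law
of `X` on `{A = a}` it has density `π a`. Since `π a > c > 0`, the second relation can be
inverted (Bayes' rule), so the law of `X` on `{A = a}` has `ν`-density `qd a / π a`. Adding the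
two arms gives the density of `X`, and `E[Y(1) - Y(0)] = E[τ(X)]` is the integral of `τX`
against that density.
-/

open MeasureTheory ProbabilityTheory Set
open scoped ENNReal

section Density

variable {α : Type*} [MeasurableSpace α] {ν : Measure α} {f g : α → ℝ}

lemma exists_spanning_measurableSet_integrableOn [SigmaFinite ν] (hf : Measurable f) :
    ∃ t : ℕ → Set α,
      (∀ n, MeasurableSet (t n) ∧ IntegrableOn f (t n) ν) ∧ ⋃ n, t n = univ := by
  obtain ⟨t, ht, ht_univ⟩ := exists_spanning_measurableSet_le hf.nnnorm ν
  refine ⟨t, fun n => ⟨(ht n).1, .of_bound (ht n).2.1 hf.aestronglyMeasurable n ?_⟩,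
    ht_univ⟩
  filter_upwards [ae_restrict_mem (ht n).1] with x hx
  exact_mod_cast (ht n).2.2 x hx

-- No integrability is assumed: where `f` is not integrable the set integrals are the junk value
-- `0`, so the argument works on the pieces of `exists_spanning_measurableSet_integrableOn`.
lemma ae_nonneg_of_forall_setIntegral_nonneg_of_measurable [SigmaFinite ν] (hf : Measurable f)
    (h : ∀ s, MeasurableSet s → 0 ≤ ∫ x in s, f x ∂ν) : 0 ≤ᵐ[ν] f := by
  obtain ⟨t, ht, ht_univ⟩ := exists_spanning_measurableSet_integrableOn (ν := ν) hf
  have hf0 : ∀ᵐ x ∂ν.restrict (⋃ n, t n), 0 ≤ f x :=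
    (ae_restrict_iUnion_iff _ _).2 fun n =>
      ae_nonneg_restrict_of_forall_setIntegral_nonneg_inter (ht n).2
        fun s hs _ => h _ (hs.inter (ht n).1)
  rwa [ht_univ, Measure.restrict_univ] at hf0

lemma withDensity_ofReal_eq_of_forall_setIntegral_eq [SigmaFinite ν] {κ : Measure α}
    [IsFiniteMeasure κ] (hf : Measurable f)
    (h : ∀ s, MeasurableSet s → ∫ x in s, f x ∂ν = κ.real s) :
    ν.withDensity (fun x => ENNReal.ofReal (f x)) = κ := by
  have hf0 : 0 ≤ᵐ[ν] f :=
    ae_nonneg_of_forall_setIntegral_nonneg_of_measurable hf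
      fun s hs => h s hs ▸ measureReal_nonneg
  obtain ⟨t, ht, ht_univ⟩ := exists_spanning_measurableSet_integrableOn (ν := ν) hf
  refine (Measure.ext_iff_of_iUnion_eq_univ ht_univ).2 fun n => Measure.ext fun s hs => ?_
  rw [Measure.restrict_apply hs, Measure.restrict_apply hs,
    withDensity_apply _ (hs.inter (ht n).1),
    ← ofReal_integral_eq_lintegral_ofReal ((ht n).2.mono_set inter_subset_right)
      (ae_restrict_of_ae hf0), h _ (hs.inter (ht n).1), ofReal_measureReal]

lemma ae_nonneg_div_of_withDensity_ofReal_eq {m : Measure α} {q p : α → ℝ} (hq : Measurable q)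
    (hp : Measurable p) (hq0 : 0 ≤ᵐ[ν] q)
    (h : ν.withDensity (fun x => ENNReal.ofReal (q x)) =
      m.withDensity (fun x => ENNReal.ofReal (p x))) :
    0 ≤ᵐ[ν] fun x => q x / p x := by
  have hN : MeasurableSet {x | p x < 0} := measurableSet_lt hp measurable_const
  have hq_null : ∫⁻ x in {x | p x < 0}, ENNReal.ofReal (q x) ∂ν = 0 := by
    rw [← withDensity_apply _ hN, h, withDensity_apply _ hN]
    exact setLIntegral_eq_zero hN fun x (hx : p x < 0) => ENNReal.ofReal_eq_zero.2 hx.le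
  filter_upwards [(setLIntegral_eq_zero_iff hN hq.ennreal_ofReal).1 hq_null, hq0] with x hx hx0
  rcases lt_or_ge (p x) 0 with hpx | hpx
  · rw [Pi.zero_apply, le_antisymm (ENNReal.ofReal_eq_zero.1 (hx hpx)) hx0, zero_div]
  · exact div_nonneg hx0 hpx

lemma withDensity_ofReal_div_eq {m : Measure α} {q p : α → ℝ} (hq : Measurable q)
    (hp : Measurable p) (hq0 : 0 ≤ᵐ[ν] q) (hp0 : ∀ᵐ x ∂m, 0 < p x)
    (h : ν.withDensity (fun x => ENNReal.ofReal (q x)) =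
      m.withDensity (fun x => ENNReal.ofReal (p x))) :
    ν.withDensity (fun x => ENNReal.ofReal (q x / p x)) = m := by
  have hp' : Measurable fun x => ENNReal.ofReal (p x)⁻¹ := hp.inv.ennreal_ofReal
  calc ν.withDensity (fun x => ENNReal.ofReal (q x / p x))
      = (ν.withDensity fun x => ENNReal.ofReal (q x)).withDensity
          fun x => ENNReal.ofReal (p x)⁻¹ := by
        rw [← withDensity_mul _ hq.ennreal_ofReal hp']
        refine withDensity_congr_ae ?_
        filter_upwards [hq0] with x hx
        rw [Pi.mul_apply, div_eq_mul_inv, ENNReal.ofReal_mul hx]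
    _ = (m.withDensity fun x => ENNReal.ofReal (p x)).withDensity
          fun x => ENNReal.ofReal (p x)⁻¹ := by rw [h]
    _ = m := by
        rw [← withDensity_mul _ hp.ennreal_ofReal hp']
        refine (withDensity_congr_ae ?_).trans withDensity_one
        filter_upwards [hp0] with x hx
        rw [Pi.mul_apply, ← ENNReal.ofReal_mul hx.le, mul_inv_cancel₀ hx.ne',
          ENNReal.ofReal_one, Pi.one_apply]

lemma ae_eq_of_withDensity_ofReal_eq [SigmaFinite ν] (hf : Measurable f) (hg : Measurable g)
    (hf0 : 0 ≤ᵐ[ν] f) (hg0 : 0 ≤ᵐ[ν] g)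
    (h : ν.withDensity (fun x => ENNReal.ofReal (f x)) =
      ν.withDensity (fun x => ENNReal.ofReal (g x))) :
    f =ᵐ[ν] g := by
  filter_upwards [(withDensity_eq_iff_of_sigmaFinite hf.ennreal_ofReal.aemeasurable
    hg.ennreal_ofReal.aemeasurable).1 h, hf0, hg0] with x hx hfx hgx
  exact (ENNReal.ofReal_eq_ofReal_iff hfx hgx).1 hx

lemma integral_withDensity_ofReal (hg : Measurable g) (hg0 : 0 ≤ᵐ[ν] g) (φ : α → ℝ) :
    ∫ x, φ x ∂ν.withDensity (fun x => ENNReal.ofReal (g x)) = ∫ x, φ x * g x ∂ν := by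
  rw [integral_withDensity_eq_integral_toReal_smul hg.ennreal_ofReal
    (ae_of_all _ fun _ => ENNReal.ofReal_lt_top)]
  refine integral_congr_ae ?_
  filter_upwards [hg0] with x hx
  rw [ENNReal.toReal_ofReal hx, smul_eq_mul, mul_comm]

lemma withDensity_ofReal_add (hf : Measurable f) (hf0 : 0 ≤ᵐ[ν] f) (hg0 : 0 ≤ᵐ[ν] g) :
    ν.withDensity (fun x => ENNReal.ofReal (f x + g x)) =
      ν.withDensity (fun x => ENNReal.ofReal (f x)) +
        ν.withDensity (fun x => ENNReal.ofReal (g x)) := by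
  rw [← withDensity_add_left hf.ennreal_ofReal]
  refine withDensity_congr_ae ?_
  filter_upwards [hf0, hg0] with x hfx hgx
  exact ENNReal.ofReal_add hfx hgx

end Density

section Law

variable {Ω α : Type*} [MeasurableSpace Ω] [MeasurableSpace α] {μ : Measure Ω}

lemma restrict_eq_true_add_restrict_eq_false {A : Ω → Bool} (hA : Measurable A) :
    μ.restrict {ω | A ω = true} + μ.restrict {ω | A ω = false} = μ := by
  have hcompl : {ω | A ω = false} = {ω | A ω = true}ᶜ := by ext; simp
  rw [hcompl]
  exact Measure.restrict_add_restrict_compl (hA (measurableSet_singleton true))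

-- Bayes' rule for densities: `p ∘ X` is the conditional probability of `T` given `X` on `S`.
lemma withDensity_div_eq_map_restrict [IsFiniteMeasure μ] {ν : Measure α} [SigmaFinite ν]
    {X : Ω → α} (hX : Measurable X) {S T : Set Ω} {q p : α → ℝ} (hq : Measurable q)
    (hp : Measurable p)
    (hqT : ∀ s, MeasurableSet s → μ.real (T ∩ X ⁻¹' s) = ∫ x in s, q x ∂ν)
    (hpT : ∀ s, MeasurableSet s → ∫ ω in S ∩ X ⁻¹' s, p (X ω) ∂μ = μ.real (T ∩ X ⁻¹' s))
    (hp0 : ∀ᵐ ω ∂μ.restrict S, 0 < p (X ω)) :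
    ν.withDensity (fun x => ENNReal.ofReal (q x / p x)) = (μ.restrict S).map X ∧
      0 ≤ᵐ[ν] fun x => q x / p x := by
  have hq0 : 0 ≤ᵐ[ν] q := ae_nonneg_of_forall_setIntegral_nonneg_of_measurable hq
    fun s hs => hqT s hs ▸ measureReal_nonneg
  have hqd : ν.withDensity (fun x => ENNReal.ofReal (q x)) = (μ.restrict T).map X :=
    withDensity_ofReal_eq_of_forall_setIntegral_eq hq fun s hs => by
      rw [map_measureReal_apply hX hs, measureReal_restrict_apply (hX hs), inter_comm,
        hqT s hs]
  have hpd : ((μ.restrict S).map X).withDensity (fun x => ENNReal.ofReal (p x)) =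
      (μ.restrict T).map X :=
    withDensity_ofReal_eq_of_forall_setIntegral_eq hp fun s hs => by
      rw [setIntegral_map hs hp.aestronglyMeasurable hX.aemeasurable,
        Measure.restrict_restrict (hX hs), inter_comm, hpT s hs, map_measureReal_apply hX hs,
        measureReal_restrict_apply (hX hs), inter_comm]
  have hp0' : ∀ᵐ x ∂(μ.restrict S).map X, 0 < p x :=
    (ae_map_iff hX.aemeasurable (measurableSet_lt measurable_const hp)).2 hp0
  exact ⟨withDensity_ofReal_div_eq hq hp hq0 hp0' (hqd.trans hpd.symm),
    ae_nonneg_div_of_withDensity_ofReal_eq hq hp hq0 (hqd.trans hpd.symm)⟩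

end Law

theorem ate_identification_formula_general
    {Ω 𝒳 ℛ : Type*} [MeasurableSpace Ω]
    [MeasurableSpace 𝒳]
    (μ : Measure Ω) [IsProbabilityMeasure μ]
    (ν : Measure 𝒳) [SigmaFinite ν]
    (A : Ω → Bool) (X : Ω → 𝒳) (R : Ω → ℛ) (Y0 Y1 : Ω → ℝ)
    (hA : Measurable A) (hX : Measurable X)
    (full : ℛ)
    -- qd a = f(A=a, X, R=1_p): sub-density of X on the event {A=a, R=1_p}
    (qd : Bool → 𝒳 → ℝ) (hqdm : ∀ a, Measurable (qd a))
    (hqd : ∀ a : Bool, ∀ s : Set 𝒳, MeasurableSet s →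
      (μ {ω | A ω = a ∧ R ω = full ∧ X ω ∈ s}).toReal = ∫ x in s, qd a x ∂ν)
    -- π a is a version of P(R=1_p | A=a, X), bounded away from zero
    (π : Bool → 𝒳 → ℝ) (hπm : ∀ a, Measurable (π a))
    (hπ_ver : ∀ a : Bool, ∀ s : Set 𝒳, MeasurableSet s →
      ∫ ω in {ω | A ω = a ∧ X ω ∈ s}, π a (X ω) ∂μ =
        (μ {ω | A ω = a ∧ R ω = full ∧ X ω ∈ s}).toReal)
    (c : ℝ) (hc : 0 < c) (hπ_pos : ∀ a : Bool, ∀ᵐ ω ∂μ, c < π a (X ω))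
    -- fX: marginal density of X with respect to ν
    (fX : 𝒳 → ℝ) (hfXm : Measurable fX)
    (hfX : ∀ s : Set 𝒳, MeasurableSet s → (μ (X ⁻¹' s)).toReal = ∫ x in s, fX x ∂ν)
    -- τX is a version of E[Y(1) − Y(0) | X]
    (τX : 𝒳 → ℝ) (hτXm : Measurable τX)
    (hτX_int : Integrable (fun ω => τX (X ω)) μ)
    (hτX_ver : ∀ s : Set 𝒳, MeasurableSet s →
      ∫ ω in X ⁻¹' s, (Y1 ω - Y0 ω) ∂μ = ∫ ω in X ⁻¹' s, τX (X ω) ∂μ) :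
    (fX =ᵐ[ν] fun x => qd true x / π true x + qd false x / π false x) ∧
      ∫ ω, (Y1 ω - Y0 ω) ∂μ =
        (∫ x, τX x * (qd true x / π true x) ∂ν) +
          ∫ x, τX x * (qd false x / π false x) ∂ν := by
  have hT : ∀ a s, {ω | A ω = a ∧ R ω = full ∧ X ω ∈ s} =
      {ω | A ω = a ∧ R ω = full} ∩ X ⁻¹' s := fun _ _ => Set.ext fun _ => and_assoc.symm
  have hg : ∀ a, Measurable fun x => qd a x / π a x := fun a => (hqdm a).div (hπm a)
  have arm : ∀ a, ν.withDensity (fun x => ENNReal.ofReal (qd a x / π a x)) =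
      (μ.restrict {ω | A ω = a}).map X ∧ 0 ≤ᵐ[ν] fun x => qd a x / π a x := fun a =>
    withDensity_div_eq_map_restrict hX (hqdm a) (hπm a) (fun s hs => hT a s ▸ hqd a s hs)
      (fun s hs => hT a s ▸ hπ_ver a s hs)
      (ae_restrict_of_ae ((hπ_pos a).mono fun _ h => hc.trans h))
  have hlaw : μ.map X = ν.withDensity (fun x => ENNReal.ofReal (qd true x / π true x)) +
      ν.withDensity (fun x => ENNReal.ofReal (qd false x / π false x)) := by
    rw [(arm true).1, (arm false).1, ← Measure.map_add _ _ hX,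
      restrict_eq_true_add_restrict_eq_false hA]
  have hfX0 : 0 ≤ᵐ[ν] fX := ae_nonneg_of_forall_setIntegral_nonneg_of_measurable hfXm
    fun s hs => hfX s hs ▸ ENNReal.toReal_nonneg
  have hfXd : ν.withDensity (fun x => ENNReal.ofReal (fX x)) = μ.map X :=
    withDensity_ofReal_eq_of_forall_setIntegral_eq hfXm fun s hs => by
      rw [map_measureReal_apply hX hs]; exact (hfX s hs).symm
  have hτ : Integrable τX (μ.map X) :=
    (integrable_map_measure hτXm.aestronglyMeasurable hX.aemeasurable).2 hτX_int
  rw [hlaw, integrable_add_measure] at hτ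
  refine ⟨ae_eq_of_withDensity_ofReal_eq hfXm ((hg true).add (hg false)) hfX0
    ((arm true).2.mp ((arm false).2.mono fun _ h₀ h₁ => add_nonneg h₁ h₀)) ?_, ?_⟩
  · rw [hfXd, hlaw, withDensity_ofReal_add (hg true) (arm true).2 (arm false).2]
  · calc ∫ ω, (Y1 ω - Y0 ω) ∂μ = ∫ x, τX x ∂μ.map X := by
          rw [integral_map hX.aemeasurable hτXm.aestronglyMeasurable]
          simpa using hτX_ver univ MeasurableSet.univ
      _ = _ := by
          rw [hlaw, integral_add_measure hτ.1 hτ.2,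
            integral_withDensity_ofReal (hg true) (arm true).2,
            integral_withDensity_ofReal (hg false) (arm false).2]

/-- Theorem 3: under unconfoundedness, outcome-independent missingness,
and positivity of `P(R=1_p | A=a, X)`, the marginal density of `X` is identified by
`f(X) = Σ_a f(A=a, X, R=1_p) / P(R=1_p | A=a, X)`, and consequently
`τ = Σ_a ∫ τ(X) f(A=a, X, R=1_p) / P(R=1_p | A=a, X) dν(X)`. -/
theorem ate_identification_formula
    {Ω 𝒳 ℛ : Type*} [MeasurableSpace Ω] [StandardBorelSpace Ω]
    [MeasurableSpace 𝒳] [MeasurableSpace ℛ] [MeasurableSingletonClass ℛ]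
    (μ : Measure Ω) [IsProbabilityMeasure μ]
    (ν : Measure 𝒳) [SigmaFinite ν]
    (A : Ω → Bool) (X : Ω → 𝒳) (R : Ω → ℛ) (Y0 Y1 : Ω → ℝ)
    (hA : Measurable A) (hX : Measurable X) (hR : Measurable R)
    (hY0 : Measurable Y0) (hY1 : Measurable Y1)
    (hint0 : Integrable Y0 μ) (hint1 : Integrable Y1 μ)
    (Y : Ω → ℝ) (hY : Y = fun ω => if A ω then Y1 ω else Y0 ω)
    (full : ℛ)
    -- unconfoundedness: (Y(0), Y(1)) ⊥ A | X
    (hunconf : CondIndepFun (MeasurableSpace.comap X inferInstance) hX.comap_le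
      (fun ω => (Y0 ω, Y1 ω)) A μ)
    -- outcome-independent missingness: R ⊥ Y | (A, X)
    (hOIM : CondIndepFun
      (MeasurableSpace.comap (fun ω => (A ω, X ω)) inferInstance)
      (Measurable.comap_le (hA.prodMk hX)) R Y μ)
    -- qd a = f(A=a, X, R=1_p): sub-density of X on the event {A=a, R=1_p}
    (qd : Bool → 𝒳 → ℝ) (hqdm : ∀ a, Measurable (qd a))
    (hqd : ∀ a : Bool, ∀ s : Set 𝒳, MeasurableSet s →
      (μ {ω | A ω = a ∧ R ω = full ∧ X ω ∈ s}).toReal = ∫ x in s, qd a x ∂ν)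
    -- π a is a version of P(R=1_p | A=a, X), bounded away from zero
    (π : Bool → 𝒳 → ℝ) (hπm : ∀ a, Measurable (π a))
    (hπ_ver : ∀ a : Bool, ∀ s : Set 𝒳, MeasurableSet s →
      ∫ ω in {ω | A ω = a ∧ X ω ∈ s}, π a (X ω) ∂μ =
        (μ {ω | A ω = a ∧ R ω = full ∧ X ω ∈ s}).toReal)
    (c : ℝ) (hc : 0 < c) (hπ_pos : ∀ a : Bool, ∀ᵐ ω ∂μ, c < π a (X ω))
    -- fX: marginal density of X with respect to ν
    (fX : 𝒳 → ℝ) (hfXm : Measurable fX)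
    (hfX : ∀ s : Set 𝒳, MeasurableSet s → (μ (X ⁻¹' s)).toReal = ∫ x in s, fX x ∂ν)
    -- τX is a version of E[Y(1) − Y(0) | X]
    (τX : 𝒳 → ℝ) (hτXm : Measurable τX)
    (hτX_int : Integrable (fun ω => τX (X ω)) μ)
    (hτX_ver : ∀ s : Set 𝒳, MeasurableSet s →
      ∫ ω in X ⁻¹' s, (Y1 ω - Y0 ω) ∂μ = ∫ ω in X ⁻¹' s, τX (X ω) ∂μ) :
    (fX =ᵐ[ν] fun x => qd true x / π true x + qd false x / π false x) ∧
      ∫ ω, (Y1 ω - Y0 ω) ∂μ =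
        (∫ x, τX x * (qd true x / π true x) ∂ν) +
          ∫ x, τX x * (qd false x / π false x) ∂ν :=
  ate_identification_formula_general μ ν A X R Y0 Y1 hA hX full qd hqdm hqd π hπm hπ_ver c hc hπ_pos
    fX hfXm hfX τX hτXm hτX_int hτX_ver
end

section
/- For a binary treatment A and scalar score e(W) = P(A=1 | W) with W any random vector, it holds that A ⊥ W | e(W): the conditional distribution of A given (W, e(W)) depends only on e(W), i.e., P(A=1 | W, e(W)) = e(W) = P(A=1 | e(W)). -/
open MeasureTheory

/-- balancing property of the propensity score: for binary `A` and
`e(W)` a version of `P(A=1 | W) = E[A | W]`, we have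
`P(A=1 | e(W)) = e(W) = P(A=1 | W)` almost surely, so `A ⊥ W | e(W)`. -/
theorem propensity_balancing
    {Ω 𝒲 : Type*} [MeasurableSpace Ω] [MeasurableSpace 𝒲]
    (μ : Measure Ω) [IsProbabilityMeasure μ]
    (A : Ω → Bool) (W : Ω → 𝒲) (hA : Measurable A) (hW : Measurable W)
    (e : 𝒲 → ℝ) (he : Measurable e)
    (indA : Ω → ℝ) (hindA : indA = fun ω => if A ω then 1 else 0)
    -- e(W) is a version of E[A | W]
    (hever : (fun ω => e (W ω)) =ᵐ[μ] μ[indA | MeasurableSpace.comap W inferInstance]) :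
    μ[indA | MeasurableSpace.comap W inferInstance]
        =ᵐ[μ] μ[indA | MeasurableSpace.comap (fun ω => e (W ω)) inferInstance] ∧
      (fun ω => e (W ω))
        =ᵐ[μ] μ[indA | MeasurableSpace.comap (fun ω => e (W ω)) inferInstance] := by
  have hm₂le : MeasurableSpace.comap W inferInstance ≤ ‹MeasurableSpace Ω› := hW.comap_le
  have hm₁le₂ : MeasurableSpace.comap (fun ω => e (W ω)) inferInstance
      ≤ MeasurableSpace.comap W (inferInstance : MeasurableSpace 𝒲) := by
    intro s hs
    obtain ⟨t, ht, rfl⟩ := hs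
    exact ⟨e ⁻¹' t, he ht, rfl⟩
  have hm₁le : MeasurableSpace.comap (fun ω => e (W ω)) inferInstance ≤ ‹MeasurableSpace Ω› :=
    hm₁le₂.trans hm₂le
  have hmeas₁ : Measurable[MeasurableSpace.comap (fun ω => e (W ω)) inferInstance]
      (fun ω => e (W ω)) := Measurable.of_comap_le le_rfl
  have hint : Integrable (fun ω => e (W ω)) μ := integrable_condExp.congr hever.symm
  have htower : μ[μ[indA | MeasurableSpace.comap W inferInstance]
        | MeasurableSpace.comap (fun ω => e (W ω)) inferInstance]
      =ᵐ[μ] μ[indA | MeasurableSpace.comap (fun ω => e (W ω)) inferInstance] :=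
    condExp_condExp_of_le hm₁le₂ hm₂le
  have hcongr : μ[μ[indA | MeasurableSpace.comap W inferInstance]
        | MeasurableSpace.comap (fun ω => e (W ω)) inferInstance]
      =ᵐ[μ] μ[(fun ω => e (W ω)) | MeasurableSpace.comap (fun ω => e (W ω)) inferInstance] :=
    condExp_congr_ae hever.symm
  have hself : μ[(fun ω => e (W ω)) | MeasurableSpace.comap (fun ω => e (W ω)) inferInstance]
      = (fun ω => e (W ω)) :=
    condExp_of_stronglyMeasurable hm₁le hmeas₁.stronglyMeasurable hint
  have key : (fun ω => e (W ω))
      =ᵐ[μ] μ[indA | MeasurableSpace.comap (fun ω => e (W ω)) inferInstance] := by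
    calc (fun ω => e (W ω))
        = μ[(fun ω => e (W ω)) | MeasurableSpace.comap (fun ω => e (W ω)) inferInstance] :=
          hself.symm
      _ =ᵐ[μ] _ := hcongr.symm.trans htower
  exact ⟨hever.symm.trans key, key⟩
end
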